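/- arXiv:1008.2104 — 2 statements merged into one kernel-verified Lean document; each statement's English description precedes it below -/
import Mathlib

section
/- Let (Ω, 𝓕, μ) be a probability space, let Y : Ω → ℝ be a nonnegative measurable function with Y ∈ L^q(μ) for every q ∈ [1, ∞), let c > 0, and let ν be the measure on Ω with density (1 + Y)/c with respect to μ; assume ν is a probability measure. Then for every measurable W : Ω → ℝ, the critical exponents coincide: the supremum (in the extended reals) of { v : ℝ | ∫ exp(v W²) dν < ∞ } equals the supremum of { v : ℝ | ∫ exp(v W²) dμ < ∞ }. -/
open MeasureTheory Real
open scoped ENNReal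

/-!
Call `v` admissible for a measure if `exp (v W²)` has finite integral against it.
Since `Y ≥ 0`, `μ ≤ c • ν`, so every exponent that is admissible for `ν` is admissible for `μ`.
Conversely, for `0 < w < v`, Hölder's inequality with `p = v / w` and its conjugate `q` gives
`∫ exp (w W²) dν = ∫ exp (w W²) (1 + Y) / c dμ ≤ (∫ exp (v W²) dμ) ^ (1 / p) ‖(1 + Y) / c‖_q`,
while exponents `w ≤ 0` are admissible for every finite measure. Hence every exponent below an
admissible one for `μ` is admissible for `ν`, and the two suprema agree.
-/

theorem EReal.sSup_coe_image_eq_of_subset_of_forall_lt {S T : Set ℝ} (hST : S ⊆ T)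
    (hTS : ∀ v ∈ T, ∀ w < v, w ∈ S) :
    sSup (Real.toEReal '' S) = sSup (Real.toEReal '' T) := by
  refine le_antisymm (sSup_le_sSup (Set.image_mono hST)) (sSup_le ?_)
  rintro _ ⟨v, hv, rfl⟩
  refine le_of_forall_lt_imp_le_of_dense fun x hxv => ?_
  obtain ⟨w, hxw, hwv⟩ := EReal.exists_between_coe_real hxv
  exact hxw.le.trans (le_sSup ⟨w, hTS v hv w (EReal.coe_lt_coe_iff.1 hwv), rfl⟩)

namespace MeasureTheory

variable {Ω : Type*} [MeasurableSpace Ω]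

theorem le_smul_withDensity {μ : Measure Ω} {d : Ω → ℝ≥0∞} (hd : Measurable d) {C : ℝ≥0∞}
    (hCd : ∀ ω, 1 ≤ C * d ω) : μ ≤ C • μ.withDensity d := by
  calc μ = μ.withDensity 1 := withDensity_one.symm
    _ ≤ μ.withDensity (C • d) := withDensity_mono (ae_of_all _ hCd)
    _ = C • μ.withDensity d := withDensity_smul C hd

theorem lintegral_withDensity_lt_top_of_holder {μ : Measure Ω} {p q : ℝ}
    (hpq : p.HolderConjugate q) {d g : Ω → ℝ≥0∞} (hd : Measurable d) (hg : Measurable g)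
    (hdq : ∫⁻ ω, d ω ^ q ∂μ < ∞) (hgp : ∫⁻ ω, g ω ^ p ∂μ < ∞) :
    ∫⁻ ω, g ω ∂μ.withDensity d < ∞ := by
  rw [lintegral_withDensity_eq_lintegral_mul μ hd hg]
  refine (ENNReal.lintegral_mul_le_Lp_mul_Lq μ hpq.symm hd.aemeasurable
    hg.aemeasurable).trans_lt (ENNReal.mul_lt_top ?_ ?_)
  · exact ENNReal.rpow_lt_top_of_nonneg (by simp [hpq.symm.nonneg]) hdq.ne
  · exact ENNReal.rpow_lt_top_of_nonneg (by simp [hpq.nonneg]) hgp.ne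

theorem lintegral_ofReal_rpow_lt_top_of_memLp {μ : Measure Ω} {f : Ω → ℝ} (hf0 : ∀ ω, 0 ≤ f ω)
    {q : ℝ} (hq : 0 < q) (hf : MemLp f (ENNReal.ofReal q) μ) :
    ∫⁻ ω, ENNReal.ofReal (f ω) ^ q ∂μ < ∞ := by
  have h := lintegral_rpow_enorm_lt_top_of_eLpNorm_lt_top (by simpa using hq)
    ENNReal.ofReal_ne_top hf.eLpNorm_lt_top
  simpa only [ENNReal.toReal_ofReal hq.le, Real.enorm_eq_ofReal (hf0 _)] using h

def expSqIntegrableExponents (μ : Measure Ω) (W : Ω → ℝ) : Set ℝ :=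
  {v | ∫⁻ ω, ENNReal.ofReal (Real.exp (v * W ω ^ 2)) ∂μ < ∞}

variable {μ ν : Measure Ω} {W : Ω → ℝ}

theorem nonpos_mem_expSqIntegrableExponents [IsFiniteMeasure μ] {w : ℝ} (hw : w ≤ 0) :
    w ∈ expSqIntegrableExponents μ W := by
  refine (lintegral_mono fun ω => ?_).trans_lt (lintegral_const_lt_top ENNReal.one_ne_top)
  exact ENNReal.ofReal_le_one.2
    (Real.exp_le_one_iff.2 (mul_nonpos_of_nonpos_of_nonneg hw (sq_nonneg _)))

theorem expSqIntegrableExponents_subset_of_le_smul {C : ℝ≥0∞} (hC : C ≠ ∞) (hμν : μ ≤ C • ν) :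
    expSqIntegrableExponents ν W ⊆ expSqIntegrableExponents μ W := fun v hv =>
  calc _ ≤ ∫⁻ ω, ENNReal.ofReal (Real.exp (v * W ω ^ 2)) ∂(C • ν) := lintegral_mono' hμν le_rfl
    _ < ∞ := by rw [lintegral_smul_measure]; exact ENNReal.mul_lt_top hC.lt_top hv

theorem mem_expSqIntegrableExponents_withDensity {d : Ω → ℝ≥0∞} (hd : Measurable d)
    (hdq : ∀ q : ℝ, 1 ≤ q → ∫⁻ ω, d ω ^ q ∂μ < ∞) (hW : Measurable W) {v w : ℝ}
    (hw : 0 < w) (hwv : w < v) (hv : v ∈ expSqIntegrableExponents μ W) :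
    w ∈ expSqIntegrableExponents (μ.withDensity d) W := by
  have hp : 1 < v / w := (one_lt_div hw).2 hwv
  have hpq := Real.HolderConjugate.conjExponent hp
  have hpow : ∀ ω, ENNReal.ofReal (Real.exp (w * W ω ^ 2)) ^ (v / w)
      = ENNReal.ofReal (Real.exp (v * W ω ^ 2)) := fun ω => by
    rw [ENNReal.ofReal_rpow_of_nonneg (Real.exp_nonneg _) hpq.nonneg, ← Real.exp_mul]
    congr 2
    field_simp
  refine lintegral_withDensity_lt_top_of_holder hpq hd
    (((hW.pow_const 2).const_mul w).exp.ennreal_ofReal) (hdq _ hpq.symm.lt.le) ?_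
  exact (lintegral_congr hpow).trans_lt hv

end MeasureTheory

/-- Let `μ` be a probability measure, `Y ≥ 0` measurable with `Y ∈ L^q(μ)` for
every `q ∈ [1, ∞)`, `c > 0`, and let `ν` be the probability measure with
density `(1 + Y)/c` w.r.t. `μ`. Then for every measurable `W : Ω → ℝ`, the
critical exponents coincide: the supremum (in the extended reals) of
`{v | ∫ exp (v W²) dν < ∞}` equals that of `{v | ∫ exp (v W²) dμ < ∞}`. -/
theorem critical_moment_eq_of_density
    {Ω : Type*} [MeasurableSpace Ω] (μ : Measure Ω) [IsProbabilityMeasure μ]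
    (Y : Ω → ℝ) (hY : Measurable Y) (hY0 : ∀ ω, 0 ≤ Y ω)
    (hYq : ∀ q : ℝ, 1 ≤ q → MemLp Y (ENNReal.ofReal q) μ)
    (c : ℝ) (hc : 0 < c)
    (ν : Measure Ω)
    (hν : ν = μ.withDensity (fun ω => ENNReal.ofReal ((1 + Y ω) / c)))
    (hνprob : IsProbabilityMeasure ν)
    (W : Ω → ℝ) (hW : Measurable W) :
    sSup (Real.toEReal ''
        {v : ℝ | ∫⁻ ω, ENNReal.ofReal (Real.exp (v * (W ω) ^ 2)) ∂ν < ∞}) =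
      sSup (Real.toEReal ''
        {v : ℝ | ∫⁻ ω, ENNReal.ofReal (Real.exp (v * (W ω) ^ 2)) ∂μ < ∞}) := by
  have hd : Measurable fun ω => ENNReal.ofReal ((1 + Y ω) / c) :=
    ((measurable_const.add hY).div_const c).ennreal_ofReal
  have hdq (q : ℝ) (hq : 1 ≤ q) : ∫⁻ ω, ENNReal.ofReal ((1 + Y ω) / c) ^ q ∂μ < ∞ :=
    lintegral_ofReal_rpow_lt_top_of_memLp (fun ω => by have := hY0 ω; positivity)
      (by linarith) (by simpa only [div_eq_mul_inv, Pi.add_apply] using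
        ((memLp_const (1 : ℝ)).add (hYq q hq)).mul_const c⁻¹)
  have hμν : μ ≤ ENNReal.ofReal c • ν := by
    refine hν ▸ le_smul_withDensity hd fun ω => ?_
    rw [← ENNReal.ofReal_mul hc.le, mul_div_cancel₀ _ hc.ne']
    exact ENNReal.one_le_ofReal.2 (by linarith [hY0 ω])
  refine EReal.sSup_coe_image_eq_of_subset_of_forall_lt
    (expSqIntegrableExponents_subset_of_le_smul ENNReal.ofReal_ne_top hμν) fun v hv w hwv => ?_
  rcases le_or_gt w 0 with hw | hw
  · exact nonpos_mem_expSqIntegrableExponents hw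
  · exact hν ▸ mem_expSqIntegrableExponents_withDensity hd hdq hW hw hwv hv
end

section
/- Abstract form of the main theorem. Let (Ω, 𝓕) be a measurable space and let m ≥ 1. Let Q₀, Q₁, …, Q_m be probability measures on Ω, let X₁, …, X_m : Ω → ℝ be nonnegative measurable functions, and let c₁, …, c_m > 0 be constants such that for each k ∈ {1,…,m}: (i) Q_{k−1} has density (1 + X_k)/c_k with respect to Q_k; and (ii) X_k ∈ L^q(Q_k) for every q ∈ [1, ∞). Let F : Ω → ℝ be a measurable function with F > 0 such that the law of log F under Q₀ is Gaussian N(μ, s) for some μ ∈ ℝ and s > 0. Then the supremum of the set { v : ℝ | ∫ exp(v (log F)²) dQ_m < ∞ } equals 1/(2s). -/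
/-!
Iterating the density relations writes `Q₀ = Q_m.withDensity D` with `D = ∏ₖ (1 + Xₖ)/cₖ`.
This density is bounded below by `∏ₖ 1/cₖ > 0`, and by Cauchy–Schwarz and the `Lᵠ` hypotheses it
has finite moments of all orders under `Q_m`. The lower bound makes every exponential moment that
is finite under `Q₀` finite under `Q_m`; since `log F` is `N(μ, s)` under `Q₀`, this covers every
`v < 1/(2s)`. Conversely, if `exp (v log² F)` is `Q_m`-integrable for some `v > 1/(2s)`, Hölder's
inequality with exponent `v / w` makes `exp (w log² F)` integrable under `Q₀` for `1/(2s) < w < v`,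
which is false for the Gaussian law since `w x² - (x - μ)²/(2s)` grows quadratically.
-/

open MeasureTheory ProbabilityTheory Real
open scoped ENNReal NNReal

lemma csSup_eq_of_Iio_subset_of_subset_Iic {α : Type*} [ConditionallyCompleteLinearOrder α]
    [DenselyOrdered α] [NoMinOrder α] {S : Set α} {a : α}
    (hIio : Set.Iio a ⊆ S) (hIic : S ⊆ Set.Iic a) : sSup S = a := by
  obtain ⟨b, hb⟩ := exists_lt a
  refine csSup_eq_of_forall_le_of_forall_lt_exists_gt ⟨b, hIio hb⟩ hIic fun w hw => ?_
  obtain ⟨v, hwv, hva⟩ := exists_between hw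
  exact ⟨v, hIio hva, hwv⟩

lemma integrable_exp_quadratic {b : ℝ} (hb : b < 0) (l e : ℝ) :
    Integrable (fun x : ℝ => rexp (b * x ^ 2 + l * x + e)) := by
  have hb' : 0 < -b := neg_pos.mpr hb
  have hb0 : b ≠ 0 := hb.ne
  refine (((integrable_exp_neg_mul_sq hb').comp_sub_right (l / (2 * -b))).const_mul
    (rexp (e - l ^ 2 / (4 * b)))).congr (.of_forall fun x => ?_)
  simp only [← Real.exp_add]
  congr 1
  field_simp
  ring

lemma lintegral_exp_quadratic_eq_top {b : ℝ} (hb : 0 < b) (l e : ℝ) :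
    ∫⁻ x : ℝ, ENNReal.ofReal (rexp (b * x ^ 2 + l * x + e)) = ∞ := by
  have hmin : ∀ x : ℝ, e - l ^ 2 / (4 * b) ≤ b * x ^ 2 + l * x + e := fun x => by
    have : b * x ^ 2 + l * x + e - (e - l ^ 2 / (4 * b)) = (2 * b * x + l) ^ 2 / (4 * b) := by
      field_simp
      ring
    linarith [div_nonneg (sq_nonneg (2 * b * x + l)) (by positivity : (0 : ℝ) ≤ 4 * b)]
  refine top_unique ?_
  calc ∞ = ∫⁻ _ : ℝ, ENNReal.ofReal (rexp (e - l ^ 2 / (4 * b))) := by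
        rw [lintegral_const, Real.volume_univ, ENNReal.mul_top (by positivity)]
    _ ≤ _ := lintegral_mono fun x => ENNReal.ofReal_le_ofReal (exp_le_exp.mpr (hmin x))

lemma gaussianPDFReal_mul_exp_mul_sq (μ : ℝ) {s : ℝ≥0} (hs : s ≠ 0) (v x : ℝ) :
    gaussianPDFReal μ s x * rexp (v * x ^ 2) = (√(2 * π * s))⁻¹ *
      rexp ((v - 1 / (2 * s)) * x ^ 2 + μ / s * x + -(μ ^ 2 / (2 * s))) := by
  have hs' : (s : ℝ) ≠ 0 := by exact_mod_cast hs
  rw [gaussianPDFReal, mul_assoc, ← Real.exp_add]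
  congr 2
  field_simp
  ring

lemma lintegral_exp_mul_sq_gaussianReal (μ : ℝ) {s : ℝ≥0} (hs : s ≠ 0) (v : ℝ) :
    ∫⁻ x, ENNReal.ofReal (rexp (v * x ^ 2)) ∂gaussianReal μ s =
      ENNReal.ofReal (√(2 * π * s))⁻¹ * ∫⁻ x, ENNReal.ofReal
        (rexp ((v - 1 / (2 * s)) * x ^ 2 + μ / s * x + -(μ ^ 2 / (2 * s)))) := by
  rw [gaussianReal_of_var_ne_zero _ hs, lintegral_withDensity_eq_lintegral_mul _
    (measurable_gaussianPDF μ s) (by fun_prop), ← lintegral_const_mul _ (by fun_prop)]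
  refine lintegral_congr fun x => ?_
  rw [Pi.mul_apply, gaussianPDF, ← ENNReal.ofReal_mul (gaussianPDFReal_nonneg μ s x),
    gaussianPDFReal_mul_exp_mul_sq μ hs, ENNReal.ofReal_mul (by positivity)]

lemma lintegral_exp_mul_sq_gaussianReal_lt_top (μ : ℝ) {s : ℝ≥0} (hs : s ≠ 0) {v : ℝ}
    (hv : v < 1 / (2 * s)) :
    ∫⁻ x, ENNReal.ofReal (rexp (v * x ^ 2)) ∂gaussianReal μ s < ∞ := by
  rw [lintegral_exp_mul_sq_gaussianReal μ hs]
  exact ENNReal.mul_lt_top ENNReal.ofReal_lt_top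
    (integrable_exp_quadratic (sub_neg.mpr hv) _ _).lintegral_lt_top

lemma lintegral_exp_mul_sq_gaussianReal_eq_top (μ : ℝ) {s : ℝ≥0} (hs : s ≠ 0) {v : ℝ}
    (hv : 1 / (2 * s) < v) :
    ∫⁻ x, ENNReal.ofReal (rexp (v * x ^ 2)) ∂gaussianReal μ s = ∞ := by
  have hs' : (0 : ℝ) < s := by exact_mod_cast pos_iff_ne_zero.mpr hs
  rw [lintegral_exp_mul_sq_gaussianReal μ hs,
    lintegral_exp_quadratic_eq_top (sub_pos.mpr hv), ENNReal.mul_top (by positivity)]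

section

variable {Ω : Type*} [MeasurableSpace Ω]

lemma lintegral_mul_lt_top_of_holderConjugate {ν : Measure Ω} {f g : Ω → ℝ≥0∞}
    (hf : AEMeasurable f ν) (hg : AEMeasurable g ν) {p q : ℝ} (hpq : p.HolderConjugate q)
    (hfp : ∫⁻ ω, f ω ^ p ∂ν < ∞) (hgq : ∫⁻ ω, g ω ^ q ∂ν < ∞) :
    ∫⁻ ω, f ω * g ω ∂ν < ∞ :=
  (ENNReal.lintegral_mul_le_Lp_mul_Lq ν hpq hf hg).trans_lt <| ENNReal.mul_lt_top
    (ENNReal.rpow_lt_top_of_nonneg (by simp [hpq.nonneg]) hfp.ne)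
    (ENNReal.rpow_lt_top_of_nonneg (by simp [hpq.symm.nonneg]) hgq.ne)

lemma lintegral_lt_top_of_withDensity {ν : Measure Ω} {D g : Ω → ℝ≥0∞} {ε : ℝ≥0∞}
    (hε : ε ≠ 0) (hDε : ∀ ω, ε ≤ D ω) (h : ∫⁻ ω, g ω ∂ν.withDensity D < ∞) :
    ∫⁻ ω, g ω ∂ν < ∞ := by
  have hle : ε • ν ≤ ν.withDensity D :=
    withDensity_const (μ := ν) ε ▸ withDensity_mono (.of_forall hDε)
  have hlt := (lintegral_mono' hle le_rfl).trans_lt h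
  rw [lintegral_smul_measure, smul_eq_mul] at hlt
  exact ENNReal.lt_top_of_mul_ne_top_right hlt.ne hε

structure IsTameDensity (ν : Measure Ω) (D : Ω → ℝ≥0∞) : Prop where
  measurable : Measurable D
  exists_le : ∃ ε ≠ 0, ∀ ω, ε ≤ D ω
  lintegral_rpow_lt_top : ∀ q : ℝ, 1 ≤ q → ∫⁻ ω, D ω ^ q ∂ν < ∞

namespace IsTameDensity

variable {ν : Measure Ω} {D : Ω → ℝ≥0∞}

lemma one [IsFiniteMeasure ν] : IsTameDensity ν 1 where
  measurable := measurable_const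
  exists_le := ⟨1, one_ne_zero, fun _ => le_rfl⟩
  lintegral_rpow_lt_top q _ := by simp

lemma ofReal {f : Ω → ℝ} (hf : Measurable f) {ε : ℝ} (hε : 0 < ε) (hfε : ∀ ω, ε ≤ f ω)
    (hLp : ∀ q : ℝ, 1 ≤ q → MemLp f (ENNReal.ofReal q) ν) :
    IsTameDensity ν fun ω => ENNReal.ofReal (f ω) where
  measurable := hf.ennreal_ofReal
  exists_le :=
    ⟨ENNReal.ofReal ε, (ENNReal.ofReal_pos.mpr hε).ne', fun ω => ENNReal.ofReal_le_ofReal (hfε ω)⟩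
  lintegral_rpow_lt_top q hq := by
    have hq0 : ENNReal.ofReal q ≠ 0 := (ENNReal.ofReal_pos.mpr (by linarith)).ne'
    have h := lintegral_rpow_enorm_lt_top_of_eLpNorm_lt_top hq0 ENNReal.ofReal_ne_top
      (hLp q hq).eLpNorm_lt_top
    rw [ENNReal.toReal_ofReal (by linarith)] at h
    simpa only [Real.enorm_of_nonneg (hε.le.trans (hfε _))] using h

lemma ofReal_one_add_div [IsFiniteMeasure ν] {X : Ω → ℝ}
    (hX : Measurable X) (hX0 : ∀ ω, 0 ≤ X ω) {c : ℝ} (hc : 0 < c)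
    (hXq : ∀ q : ℝ, 1 ≤ q → MemLp X (ENNReal.ofReal q) ν) :
    IsTameDensity ν fun ω => ENNReal.ofReal ((1 + X ω) / c) := by
  refine .ofReal ((measurable_const.add hX).div_const c) (inv_pos.mpr hc) (fun ω => ?_)
    fun q hq => ?_
  · rw [div_eq_inv_mul]
    exact le_mul_of_one_le_right (inv_pos.mpr hc).le (by linarith [hX0 ω])
  · have h : MemLp (fun ω => 1 + X ω) (ENNReal.ofReal q) ν :=
      (memLp_const (1 : ℝ)).add (hXq q hq)
    simpa only [div_eq_inv_mul] using h.const_mul c⁻¹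

lemma lintegral_lt_top_of_withDensity (hD : IsTameDensity ν D) {g : Ω → ℝ≥0∞}
    (h : ∫⁻ ω, g ω ∂ν.withDensity D < ∞) : ∫⁻ ω, g ω ∂ν < ∞ :=
  have ⟨_, hε, hDε⟩ := hD.exists_le
  _root_.lintegral_lt_top_of_withDensity hε hDε h

lemma mul {d : Ω → ℝ≥0∞} (hd : IsTameDensity ν d) (hD : IsTameDensity (ν.withDensity d) D) :
    IsTameDensity ν (d * D) where
  measurable := hd.measurable.mul hD.measurable
  exists_le := by
    obtain ⟨ε, hε, hdε⟩ := hd.exists_le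
    obtain ⟨δ, hδ, hDδ⟩ := hD.exists_le
    exact ⟨ε * δ, mul_ne_zero hε hδ, fun ω => mul_le_mul' (hdε ω) (hDδ ω)⟩
  lintegral_rpow_lt_top q hq := by
    have h2q : 1 ≤ 2 * q := by linarith
    have hsq : ∀ f : Ω → ℝ≥0∞, ∀ ω, (f ω ^ q) ^ (2 : ℝ) = f ω ^ (2 * q) := fun f ω => by
      rw [← ENNReal.rpow_mul, mul_comm]
    simp_rw [Pi.mul_apply, ENNReal.mul_rpow_of_nonneg _ _ (by linarith : (0 : ℝ) ≤ q)]
    -- Cauchy–Schwarz, with the moments of `D` under `ν` controlled through the lower bound on `d`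
    refine lintegral_mul_lt_top_of_holderConjugate (hd.measurable.pow_const q).aemeasurable
      (hD.measurable.pow_const q).aemeasurable .two_two ?_ ?_
    · simpa only [hsq] using hd.lintegral_rpow_lt_top _ h2q
    · simpa only [hsq] using hd.lintegral_lt_top_of_withDensity (hD.lintegral_rpow_lt_top _ h2q)

end IsTameDensity

lemma exists_isTameDensity_of_forall_castSucc {m : ℕ} {Q : Fin (m + 1) → Measure Ω}
    [IsFiniteMeasure (Q 0)]
    (h : ∀ k : Fin m, ∃ d, IsTameDensity (Q k.succ) d ∧ Q k.castSucc = (Q k.succ).withDensity d)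
    (k : Fin (m + 1)) : ∃ D, IsTameDensity (Q k) D ∧ Q 0 = (Q k).withDensity D := by
  induction k using Fin.induction with
  | zero => exact ⟨1, .one, withDensity_one.symm⟩
  | succ k ih =>
    obtain ⟨D, hD, hQD⟩ := ih
    obtain ⟨d, hd, hQd⟩ := h k
    refine ⟨d * D, hd.mul (hQd ▸ hD), ?_⟩
    rw [withDensity_mul _ hd.measurable hD.measurable, ← hQd, hQD]

theorem sSup_lintegral_exp_mul_sq_lt_top {ν : Measure Ω} {D : Ω → ℝ≥0∞}
    (hD : IsTameDensity ν D) {Y : Ω → ℝ} (hY : Measurable Y) {μ : ℝ} {s : ℝ≥0} (hs : s ≠ 0)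
    (hlaw : (ν.withDensity D).map Y = gaussianReal μ s) :
    sSup {v : ℝ | ∫⁻ ω, ENNReal.ofReal (rexp (v * Y ω ^ 2)) ∂ν < ∞} = 1 / (2 * s) := by
  have hG : ∀ v : ℝ, Measurable fun ω => ENNReal.ofReal (rexp (v * Y ω ^ 2)) := by fun_prop
  have hmap : ∀ v : ℝ, ∫⁻ ω, ENNReal.ofReal (rexp (v * Y ω ^ 2)) ∂ν.withDensity D =
      ∫⁻ x, ENNReal.ofReal (rexp (v * x ^ 2)) ∂gaussianReal μ s := fun v => by
    rw [← hlaw, lintegral_map (by fun_prop) hY]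
  refine csSup_eq_of_Iio_subset_of_subset_Iic (fun v hv => ?_) (fun v hv => ?_)
  · exact hD.lintegral_lt_top_of_withDensity
      ((hmap v).trans_lt (lintegral_exp_mul_sq_gaussianReal_lt_top μ hs hv))
  · by_contra! hav
    rw [Set.mem_Iic, not_le] at hav
    obtain ⟨w, haw, hwv⟩ := exists_between hav
    have hw : 0 < w := lt_of_le_of_lt (by positivity) haw
    have hp : 1 < v / w := (one_lt_div hw).mpr hwv
    -- Hölder with exponent `v / w` turns the `v`-moment under `ν` into a `w`-moment under
    -- `ν.withDensity D`
    have hpow : ∀ ω, ENNReal.ofReal (rexp (w * Y ω ^ 2)) ^ (v / w) =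
        ENNReal.ofReal (rexp (v * Y ω ^ 2)) := fun ω => by
      rw [ENNReal.ofReal_rpow_of_nonneg (exp_nonneg _) (by positivity), ← Real.exp_mul]
      congr 2
      field_simp
    have hfin : ∫⁻ ω, ENNReal.ofReal (rexp (w * Y ω ^ 2)) ∂ν.withDensity D < ∞ := by
      rw [lintegral_withDensity_eq_lintegral_mul _ hD.measurable (hG w)]
      simp_rw [Pi.mul_apply, mul_comm (D _)]
      exact lintegral_mul_lt_top_of_holderConjugate (hG w).aemeasurable
        hD.measurable.aemeasurable (.conjExponent hp) (by simp only [hpow]; exact hv)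
        (hD.lintegral_rpow_lt_top _ (Real.HolderConjugate.conjExponent hp).symm.lt.le)
    exact hfin.ne ((hmap w).trans (lintegral_exp_mul_sq_gaussianReal_eq_top μ hs haw))

end

theorem critical_moment_libor_general
    {Ω : Type*} [MeasurableSpace Ω] (m : ℕ)
    (Q : Fin (m + 1) → Measure Ω) (hQ : ∀ k, IsProbabilityMeasure (Q k))
    (X : Fin m → Ω → ℝ) (hX : ∀ k, Measurable (X k))
    (hX0 : ∀ k, ∀ ω, 0 ≤ X k ω)
    (c : Fin m → ℝ) (hc : ∀ k, 0 < c k)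
    (hdens : ∀ k : Fin m,
      Q k.castSucc =
        (Q k.succ).withDensity (fun ω => ENNReal.ofReal ((1 + X k ω) / c k)))
    (hXq : ∀ k : Fin m, ∀ q : ℝ, 1 ≤ q →
      MemLp (X k) (ENNReal.ofReal q) (Q k.succ))
    (F : Ω → ℝ) (hF : Measurable F)
    (μ : ℝ) (s : ℝ≥0) (hs : 0 < s)
    (hlaw : (Q 0).map (fun ω => Real.log (F ω)) = gaussianReal μ s) :
    sSup {v : ℝ |
        ∫⁻ ω, ENNReal.ofReal (Real.exp (v * (Real.log (F ω)) ^ 2))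
          ∂(Q (Fin.last m)) < ∞} =
      1 / (2 * (s : ℝ)) := by
  have := hQ
  obtain ⟨D, hD, hQD⟩ := exists_isTameDensity_of_forall_castSucc
    (fun k => ⟨_, .ofReal_one_add_div (hX k) (hX0 k) (hc k) (hXq k), hdens k⟩) (Fin.last m)
  rw [hQD] at hlaw
  exact sSup_lintegral_exp_mul_sq_lt_top hD hF.log hs.ne' hlaw

/-- Abstract form of the main theorem of the paper. Let `Q 0, Q 1, …, Q m`
(`m ≥ 1`) be probability measures such that for each `k`, `Q k` has density
`(1 + X k)/c k` with respect to `Q (k+1)`, where `X k ≥ 0` is in `L^q(Q (k+1))`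
for every `q ∈ [1, ∞)` and `c k > 0`. If `F > 0` is measurable and the law of
`log F` under `Q 0` is Gaussian `N(μ, s)` with `s > 0`, then
`sup {v | ∫ exp (v (log F)²) d(Q m) < ∞} = 1/(2s)`. -/
theorem critical_moment_libor
    {Ω : Type*} [MeasurableSpace Ω] (m : ℕ) (hm : 1 ≤ m)
    (Q : Fin (m + 1) → Measure Ω) (hQ : ∀ k, IsProbabilityMeasure (Q k))
    (X : Fin m → Ω → ℝ) (hX : ∀ k, Measurable (X k))
    (hX0 : ∀ k, ∀ ω, 0 ≤ X k ω)
    (c : Fin m → ℝ) (hc : ∀ k, 0 < c k)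
    (hdens : ∀ k : Fin m,
      Q k.castSucc =
        (Q k.succ).withDensity (fun ω => ENNReal.ofReal ((1 + X k ω) / c k)))
    (hXq : ∀ k : Fin m, ∀ q : ℝ, 1 ≤ q →
      MemLp (X k) (ENNReal.ofReal q) (Q k.succ))
    (F : Ω → ℝ) (hF : Measurable F) (hFpos : ∀ ω, 0 < F ω)
    (μ : ℝ) (s : ℝ≥0) (hs : 0 < s)
    (hlaw : (Q 0).map (fun ω => Real.log (F ω)) = gaussianReal μ s) :
    sSup {v : ℝ |
        ∫⁻ ω, ENNReal.ofReal (Real.exp (v * (Real.log (F ω)) ^ 2))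
          ∂(Q (Fin.last m)) < ∞} =
      1 / (2 * (s : ℝ)) :=
  critical_moment_libor_general m Q hQ X hX hX0 c hc hdens hXq F hF μ s hs hlaw
end
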